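/- arXiv:1502.06342 — 3 statements merged into one kernel-verified Lean document; each statement's English description precedes it below -/
import Mathlib

section
/- If g:[0,∞)→ℝ is absolutely continuous with g(0)=0, g' square integrable, and sup_{t≥0}|g(t)|/(1+t) ≥ 1, then (1/2)∫_0^∞ (g'(t))^2 dt ≥ 2. -/
/-!
Cauchy–Schwarz in AM–GM form: for every `c > 0`, `|g t| ≤ ∫₀ᵗ |g'| ≤ (∫₀^∞ g'² + c² t) / (2c)`.
Once `c² ≥ ∫₀^∞ g'²` this is at most `c (1 + t) / 2`, so the supremum in the hypothesis is at
most `c / 2` for every `c > √(∫₀^∞ g'²)`, forcing `∫₀^∞ g'² ≥ 4`.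
-/

open Set MeasureTheory intervalIntegral

lemma abs_le_sq_add_sq_div_two_mul {c : ℝ} (hc : 0 < c) (x : ℝ) :
    |x| ≤ (x ^ 2 + c ^ 2) / (2 * c) := by
  rw [le_div_iff₀ (by positivity)]
  nlinarith [sq_nonneg (|x| - c), sq_abs x]

lemma abs_intervalIntegral_le_integral_sq_add {f : ℝ → ℝ} {a b c : ℝ} (hab : a ≤ b) (hc : 0 < c)
    (hf : IntervalIntegrable f volume a b)
    (hf2 : IntervalIntegrable (fun s => f s ^ 2) volume a b) :
    |∫ s in a..b, f s| ≤ ((∫ s in a..b, f s ^ 2) + c ^ 2 * (b - a)) / (2 * c) :=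
  calc |∫ s in a..b, f s| ≤ ∫ s in a..b, |f s| := abs_integral_le_integral_abs hab
    _ ≤ ∫ s in a..b, (f s ^ 2 + c ^ 2) / (2 * c) :=
        integral_mono_on hab hf.abs ((hf2.add intervalIntegrable_const).div_const _)
          fun s _ => abs_le_sq_add_sq_div_two_mul hc (f s)
    _ = ((∫ s in a..b, f s ^ 2) + c ^ 2 * (b - a)) / (2 * c) := by
        rw [intervalIntegral.integral_div, integral_add hf2 intervalIntegrable_const,
          intervalIntegral.integral_const, smul_eq_mul]
        ring

lemma intervalIntegral_le_integral_Ioi {f : ℝ → ℝ} {a b : ℝ} (hab : a ≤ b)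
    (hf : IntegrableOn f (Ioi a)) (hf0 : ∀ x, 0 ≤ f x) :
    ∫ x in a..b, f x ≤ ∫ x in Ioi a, f x := by
  rw [integral_of_le hab]
  exact setIntegral_mono_set hf (.of_forall hf0) Ioc_subset_Ioi_self.eventuallyLE

lemma abs_le_mul_one_add_of_integral_sq_le {g g' : ℝ → ℝ}
    (hrep : ∀ t ≥ (0:ℝ), g t = ∫ s in (0:ℝ)..t, g' s)
    (hloc : ∀ T > (0:ℝ), IntervalIntegrable g' volume 0 T)
    (hL2 : IntegrableOn (fun t => g' t ^ 2) (Ioi 0))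
    {c : ℝ} (hc : 0 < c) (hE : ∫ t in Ioi (0:ℝ), g' t ^ 2 ≤ c ^ 2) {t : ℝ} (ht : 0 ≤ t) :
    |g t| ≤ c / 2 * (1 + t) := by
  have hg' : IntervalIntegrable g' volume 0 t := by
    rcases ht.eq_or_lt with rfl | ht
    · exact .refl
    · exact hloc t ht
  have hg'2 : IntervalIntegrable (fun s => g' s ^ 2) volume 0 t :=
    (intervalIntegrable_iff_integrableOn_Ioc_of_le ht).2 (hL2.mono_set Ioc_subset_Ioi_self)
  have hEt : ∫ s in (0:ℝ)..t, g' s ^ 2 ≤ c ^ 2 :=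
    (intervalIntegral_le_integral_Ioi ht hL2 fun _ => sq_nonneg _).trans hE
  calc |g t| ≤ ((∫ s in (0:ℝ)..t, g' s ^ 2) + c ^ 2 * (t - 0)) / (2 * c) :=
        hrep t ht ▸ abs_intervalIntegral_le_integral_sq_add ht hc hg' hg'2
    _ ≤ (c ^ 2 + c ^ 2 * t) / (2 * c) := by rw [sub_zero]; gcongr
    _ = c / 2 * (1 + t) := by field_simp

theorem schilder_lower_bound_on_B_general
    (g g' : ℝ → ℝ)
    (hrep : ∀ t ≥ (0:ℝ), g t = ∫ s in (0:ℝ)..t, g' s)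
    (hloc : ∀ T > (0:ℝ), IntervalIntegrable g' MeasureTheory.volume 0 T)
    (hL2 : MeasureTheory.Integrable (fun t => (g' t) ^ 2)
      (MeasureTheory.volume.restrict (Ioi (0:ℝ))))
    (hsup : (1 : ENNReal) ≤ ⨆ t : Ici (0:ℝ), ENNReal.ofReal (|g t| / (1 + (t:ℝ)))) :
    (2 : ℝ) ≤ 2⁻¹ * ∫ t in Ioi (0:ℝ), (g' t) ^ 2 := by
  set E := ∫ t in Ioi (0:ℝ), g' t ^ 2
  have hE0 : 0 ≤ E := setIntegral_nonneg measurableSet_Ioi fun _ _ => sq_nonneg _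
  have h2 : 2 ≤ √E := by
    refine le_of_forall_gt_imp_ge_of_dense fun c hc => ?_
    have hc0 : 0 < c := (Real.sqrt_nonneg E).trans_lt hc
    have hEc : E ≤ c ^ 2 := ((Real.sqrt_lt' hc0).1 hc).le
    have hsup_le : (1 : ENNReal) ≤ ENNReal.ofReal (c / 2) :=
      hsup.trans <| iSup_le fun ⟨t, ht⟩ => ENNReal.ofReal_le_ofReal <|
        div_le_of_le_mul₀ (by linarith [mem_Ici.1 ht]) (by positivity)
          (abs_le_mul_one_add_of_integral_sq_le hrep hloc hL2 hc0 hEc ht)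
    linarith [ENNReal.one_le_ofReal.1 hsup_le]
  linarith [(Real.le_sqrt zero_le_two hE0).1 h2]

/-- If `g` is absolutely continuous with `g(0)=0`, `g'` square integrable, and
`sup_{t≥0} |g(t)|/(1+t) ≥ 1`, then `(1/2)∫_0^∞ (g'(t))² dt ≥ 2`. -/
theorem schilder_lower_bound_on_B
    (g g' : ℝ → ℝ)
    (hg0 : g 0 = 0)
    (hrep : ∀ t ≥ (0:ℝ), g t = ∫ s in (0:ℝ)..t, g' s)
    (hloc : ∀ T > (0:ℝ), IntervalIntegrable g' MeasureTheory.volume 0 T)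
    (hL2 : MeasureTheory.Integrable (fun t => (g' t) ^ 2)
      (MeasureTheory.volume.restrict (Ioi (0:ℝ))))
    (hsup : (1 : ENNReal) ≤ ⨆ t : Ici (0:ℝ), ENNReal.ofReal (|g t| / (1 + (t:ℝ)))) :
    (2 : ℝ) ≤ 2⁻¹ * ∫ t in Ioi (0:ℝ), (g' t) ^ 2 :=
  schilder_lower_bound_on_B_general g g' hrep hloc hL2 hsup
end

section
/- The function f(t) = 2t for 0 ≤ t ≤ 1 and f(t) = 2 for t ≥ 1 satisfies f(0)=0, sup_{t≥0}|f(t)|/(1+t) = 1, and (1/2)∫_0^∞ (f'(t))² dt = 2. Hence the infimum of (1/2)∫_0^∞ (g')² over absolutely continuous g with g(0)=0 and sup_{t≥0}|g(t)|/(1+t) ≥ 1 equals 2. -/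
open Set MeasureTheory Topology

/-! If `g(t) = ∫₀ᵗ g'`, Cauchy–Schwarz gives `g(t)² ≤ t ∫₀^∞ g'²`, and `4t ≤ (1 + t)²`, so
`|g(t)|/(1+t) ≤ √(2 I(g)) / 2` for every `t ≥ 0`; on `B` this forces `I(g) ≥ 2`. The ramp `f`
meets this bound with equality at `t = 1`, where `|f(1)|/2 = 1`. -/

section CauchySchwarz

variable {u : ℝ → ℝ} {a b : ℝ}

lemma two_mul_mul_abs_intervalIntegral_le {c : ℝ} (hc : 0 ≤ c) (hab : a ≤ b)
    (hu : IntervalIntegrable u volume a b)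
    (hu_sq : IntervalIntegrable (fun s => u s ^ 2) volume a b) :
    2 * c * |∫ s in a..b, u s| ≤ (∫ s in a..b, u s ^ 2) + c ^ 2 * (b - a) :=
  calc 2 * c * |∫ s in a..b, u s| ≤ 2 * c * ∫ s in a..b, |u s| := by
        gcongr; exact intervalIntegral.abs_integral_le_integral_abs hab
    _ = ∫ s in a..b, 2 * c * |u s| := (intervalIntegral.integral_const_mul _ _).symm
    _ ≤ ∫ s in a..b, (u s ^ 2 + c ^ 2) := by
        refine intervalIntegral.integral_mono_on hab (hu.abs.const_mul _)
          (hu_sq.add intervalIntegrable_const) fun s _ => ?_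
        nlinarith [sq_nonneg (|u s| - c), sq_abs (u s)]
    _ = (∫ s in a..b, u s ^ 2) + c ^ 2 * (b - a) := by
        rw [intervalIntegral.integral_add hu_sq intervalIntegrable_const,
          intervalIntegral.integral_const, smul_eq_mul, mul_comm]

lemma sq_intervalIntegral_le (hab : a ≤ b) (hu : IntervalIntegrable u volume a b)
    (hu_sq : IntervalIntegrable (fun s => u s ^ 2) volume a b) :
    (∫ s in a..b, u s) ^ 2 ≤ (b - a) * ∫ s in a..b, u s ^ 2 := by
  rcases hab.eq_or_lt with rfl | hab'
  · simp
  have hba : 0 < b - a := sub_pos.mpr hab'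
  -- the AM-GM bound is sharpest at `c = |∫ u| / (b - a)`
  have h := two_mul_mul_abs_intervalIntegral_le
    (div_nonneg (abs_nonneg (∫ s in a..b, u s)) hba.le) hab hu hu_sq
  rw [← sq_abs]
  set I := |∫ s in a..b, u s|
  have h_eval : 2 * (I / (b - a)) * I - (I / (b - a)) ^ 2 * (b - a) = I ^ 2 / (b - a) := by
    field_simp; ring
  rw [← div_le_iff₀' hba]
  linarith

end CauchySchwarz

lemma abs_div_one_add_le_sqrt_integral_sq {g g' : ℝ → ℝ}
    (hg : ∀ t ≥ (0:ℝ), g t = ∫ s in (0:ℝ)..t, g' s)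
    (hg' : ∀ T > (0:ℝ), IntervalIntegrable g' volume 0 T)
    (hg'_sq : IntegrableOn (fun t => g' t ^ 2) (Ioi 0)) {t : ℝ} (ht : 0 ≤ t) :
    |g t| / (1 + t) ≤ √(∫ s in Ioi (0:ℝ), g' s ^ 2) / 2 := by
  set E := ∫ s in Ioi (0:ℝ), g' s ^ 2
  have hE : 0 ≤ E := setIntegral_nonneg measurableSet_Ioi fun _ _ => sq_nonneg _
  have h_partial : ∫ s in (0:ℝ)..t, g' s ^ 2 ≤ E := by
    rw [intervalIntegral.integral_of_le ht]
    exact setIntegral_mono_set hg'_sq (ae_of_all _ fun _ => sq_nonneg _)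
      Ioc_subset_Ioi_self.eventuallyLE
  have h_cs : g t ^ 2 ≤ t * E := by
    rcases ht.eq_or_lt with rfl | ht'
    · simp [hg 0 le_rfl]
    have hg'_sq_t : IntervalIntegrable (fun s => g' s ^ 2) volume 0 t :=
      (intervalIntegrable_iff_integrableOn_Ioc_of_le ht).mpr (hg'_sq.mono_set Ioc_subset_Ioi_self)
    rw [hg t ht]
    calc _ ≤ (t - 0) * ∫ s in (0:ℝ)..t, g' s ^ 2 := sq_intervalIntegral_le ht (hg' t ht') hg'_sq_t
      _ ≤ t * E := by rw [sub_zero]; gcongr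
  rw [div_le_iff₀ (by linarith)]
  refine abs_le_of_sq_le_sq ?_ (by positivity)
  calc g t ^ 2 ≤ t * E := h_cs
    _ ≤ E / 4 * (1 + t) ^ 2 := by nlinarith [sq_nonneg (1 - t)]
    _ = (√E / 2 * (1 + t)) ^ 2 := by rw [mul_pow, div_pow, Real.sq_sqrt hE]; ring

-- the values `I(g)` of the Schilder rate function on `B`, each `g` given together with its `g'`
def schilderEnergies : Set ℝ :=
  {y : ℝ | ∃ g g' : ℝ → ℝ,
        g 0 = 0 ∧
        (∀ t ≥ (0:ℝ), g t = ∫ s in (0:ℝ)..t, g' s) ∧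
        (∀ T > (0:ℝ), IntervalIntegrable g' MeasureTheory.volume 0 T) ∧
        MeasureTheory.Integrable (fun t => (g' t) ^ 2)
          (MeasureTheory.volume.restrict (Ioi (0:ℝ))) ∧
        (1 : ENNReal) ≤ (⨆ t : Ici (0:ℝ), ENNReal.ofReal (|g t| / (1 + (t:ℝ)))) ∧
        y = 2⁻¹ * ∫ t in Ioi (0:ℝ), (g' t) ^ 2}

lemma two_le_of_mem_schilderEnergies {y : ℝ} (hy : y ∈ schilderEnergies) : 2 ≤ y := by
  obtain ⟨g, g', -, hg, hg', hg'_sq, h_sup, rfl⟩ := hy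
  have h_bound : (1 : ENNReal) ≤ ENNReal.ofReal (√(∫ s in Ioi (0:ℝ), g' s ^ 2) / 2) :=
    h_sup.trans <| iSup_le fun t => ENNReal.ofReal_le_ofReal <|
      abs_div_one_add_le_sqrt_integral_sq hg hg' hg'_sq t.2
  have h_sqrt : 2 ≤ √(∫ s in Ioi (0:ℝ), g' s ^ 2) := by
    linarith [ENNReal.one_le_ofReal.mp h_bound]
  linarith [(Real.le_sqrt' two_pos).mp h_sqrt]

noncomputable section Ramp

def ramp (t : ℝ) : ℝ := if t ≤ 1 then 2 * t else 2

def rampDeriv (t : ℝ) : ℝ := if t < 1 then 2 else 0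

lemma continuous_ramp : Continuous ramp :=
  (continuous_const.mul continuous_id).if_le continuous_const continuous_id continuous_const
    fun _ h => by norm_num [h]

lemma hasDerivAt_ramp {t : ℝ} (ht : t ≠ 1) : HasDerivAt ramp (rampDeriv t) t := by
  rcases ht.lt_or_gt with ht | ht
  · have h_eq : ramp =ᶠ[𝓝 t] fun s => 2 * s :=
      (eventually_lt_nhds ht).mono fun s hs => if_pos (le_of_lt hs)
    simpa [rampDeriv, ht] using ((hasDerivAt_id t).const_mul 2).congr_of_eventuallyEq h_eq
  · have h_eq : ramp =ᶠ[𝓝 t] fun _ => 2 :=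
      (eventually_gt_nhds ht).mono fun s hs => if_neg (not_le.mpr hs)
    simpa [rampDeriv, not_lt.mpr ht.le] using (hasDerivAt_const t (2:ℝ)).congr_of_eventuallyEq h_eq

lemma rampDeriv_sq_eq_indicator : (fun t => rampDeriv t ^ 2) = (Iio 1).indicator fun _ => 4 := by
  ext t
  by_cases ht : t < 1 <;> norm_num [rampDeriv, ht]

lemma antitone_rampDeriv : Antitone rampDeriv := by
  intro s t hst
  by_cases ht : t < 1
  · simp [rampDeriv, ht, hst.trans_lt ht]
  · by_cases hs : s < 1 <;> norm_num [rampDeriv, hs, ht]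

lemma intervalIntegrable_rampDeriv (a b : ℝ) : IntervalIntegrable rampDeriv volume a b :=
  antitone_rampDeriv.intervalIntegrable

lemma ramp_eq_integral_rampDeriv {t : ℝ} (ht : 0 ≤ t) : ramp t = ∫ s in (0:ℝ)..t, rampDeriv s := by
  rw [integral_eq_of_hasDerivAt_off_countable_of_le ramp rampDeriv ht
    (countable_singleton 1) continuous_ramp.continuousOn
    (fun s hs => hasDerivAt_ramp hs.2) (intervalIntegrable_rampDeriv 0 t)]
  norm_num [ramp]

lemma integrableOn_rampDeriv_sq : IntegrableOn (fun t => rampDeriv t ^ 2) (Ioi 0) := by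
  rw [rampDeriv_sq_eq_indicator, IntegrableOn, integrable_indicator_iff measurableSet_Iio,
    IntegrableOn, Measure.restrict_restrict measurableSet_Iio, Iio_inter_Ioi]
  exact integrableOn_const measure_Ioo_lt_top.ne

lemma integral_rampDeriv_sq : ∫ t in Ioi (0:ℝ), rampDeriv t ^ 2 = 4 := by
  rw [rampDeriv_sq_eq_indicator, setIntegral_indicator measurableSet_Iio, Ioi_inter_Iio]
  simp

lemma abs_ramp_div_le_one {t : ℝ} (ht : 0 ≤ t) : |ramp t| / (1 + t) ≤ 1 := by
  rw [div_le_one (by linarith)]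
  unfold ramp
  split_ifs <;> rw [abs_of_nonneg (by linarith)] <;> linarith

lemma iSup_abs_ramp_div : ⨆ t : Ici (0:ℝ), |ramp t| / (1 + (t:ℝ)) = 1 := by
  refine le_antisymm (ciSup_le fun t => abs_ramp_div_le_one t.2) ?_
  refine le_ciSup_of_le ⟨1, forall_mem_range.mpr fun t => abs_ramp_div_le_one t.2⟩
    ⟨1, mem_Ici.mpr zero_le_one⟩ ?_
  norm_num [ramp]

lemma two_mem_schilderEnergies : 2 ∈ schilderEnergies := by
  refine ⟨ramp, rampDeriv, by norm_num [ramp], fun t ht => ramp_eq_integral_rampDeriv ht,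
    fun T _ => intervalIntegrable_rampDeriv 0 T, integrableOn_rampDeriv_sq, ?_, ?_⟩
  · refine le_iSup_of_le ⟨1, mem_Ici.mpr zero_le_one⟩ ?_
    norm_num [ramp]
  · rw [integral_rampDeriv_sq]; norm_num

end Ramp

/-- The function `f(t) = 2t` on `[0,1]`, `= 2` for `t ≥ 1` has `f(0)=0`,
`sup_{t≥0}|f(t)|/(1+t) = 1` and energy `(1/2)∫_0^∞ (f')² = 2`; moreover the infimum of
`(1/2)∫_0^∞(g')²` over absolutely continuous `g` with `g(0)=0`, `g' ∈ L²` and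
`sup_{t≥0}|g(t)|/(1+t) ≥ 1` equals `2`. -/
theorem schilder_infimum_eq_two
    (f f' : ℝ → ℝ)
    (hf : ∀ t, f t = if t ≤ 1 then 2 * t else 2)
    (hf' : ∀ t, f' t = if t < 1 then 2 else 0) :
    f 0 = 0 ∧
    (⨆ t : Ici (0:ℝ), |f t| / (1 + (t:ℝ))) = 1 ∧
    2⁻¹ * (∫ t in Ioi (0:ℝ), (f' t) ^ 2) = 2 ∧
    sInf {y : ℝ | ∃ g g' : ℝ → ℝ,
        g 0 = 0 ∧
        (∀ t ≥ (0:ℝ), g t = ∫ s in (0:ℝ)..t, g' s) ∧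
        (∀ T > (0:ℝ), IntervalIntegrable g' MeasureTheory.volume 0 T) ∧
        MeasureTheory.Integrable (fun t => (g' t) ^ 2)
          (MeasureTheory.volume.restrict (Ioi (0:ℝ))) ∧
        (1 : ENNReal) ≤ (⨆ t : Ici (0:ℝ), ENNReal.ofReal (|g t| / (1 + (t:ℝ)))) ∧
        y = 2⁻¹ * ∫ t in Ioi (0:ℝ), (g' t) ^ 2} = 2 := by
  obtain rfl : f = ramp := funext hf
  obtain rfl : f' = rampDeriv := funext hf'
  refine ⟨by norm_num [ramp], iSup_abs_ramp_div, by rw [integral_rampDeriv_sq]; norm_num, ?_⟩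
  exact IsLeast.csInf_eq ⟨two_mem_schilderEnergies, fun _ => two_le_of_mem_schilderEnergies⟩
end

section
/- Suppose a nonnegative function Λ:ℝ→[0,∞] satisfies Λ(α) ≥ h(|α|)·|α| for all α, where h is nondecreasing, continuous, h(t) = δt for 0 ≤ t ≤ 1 with δ > 0, and h(t) → ∞. If f:[0,T]→ℝ is absolutely continuous with f(0)=0 and ∫_0^T Λ(f'(t)) dt ≤ r, then for all T ≥ r/δ, |f(T)| ≤ √(r/δ)·√T. -/
open Set MeasureTheory

/-! By Jensen's inequality the rate bound forces `Λ(f(T)/T) ≤ r/T`. On the other hand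
`Λ(α) ≥ δ · min(|α|, 1) · |α|`, and `T ≥ r/δ` means `r/T ≤ δ`, so the slope `|f(T)|/T` cannot
exceed `1`; in the quadratic regime the bound reads `δ (|f(T)|/T)² ≤ r/T`. -/

lemma integrableOn_of_lintegral_ofReal_le {g : ℝ → ℝ} {s : Set ℝ} {r : ℝ} (hr : 0 ≤ r)
    (hg0 : ∀ t, 0 ≤ g t) (hgm : AEStronglyMeasurable g (volume.restrict s))
    (hgr : ∫⁻ t in s, ENNReal.ofReal (g t) ≤ ENNReal.ofReal r) :
    IntegrableOn g s ∧ ∫ t in s, g t ≤ r := by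
  have hg0' : 0 ≤ᵐ[volume.restrict s] g := Filter.Eventually.of_forall hg0
  refine ⟨⟨hgm, (hasFiniteIntegral_iff_ofReal hg0').mpr (hgr.trans_lt ENNReal.ofReal_lt_top)⟩, ?_⟩
  rw [integral_eq_lintegral_of_nonneg_ae hg0' hgm]
  exact ENNReal.toReal_le_of_le_ofReal hr hgr

lemma ConvexOn.map_intervalIntegral_div_le {Λ : ℝ → ℝ} (hΛ0 : ∀ α, 0 ≤ Λ α)
    (hΛ : ConvexOn ℝ univ Λ) {g : ℝ → ℝ} {a b r : ℝ} (hab : a < b) (hr : 0 ≤ r)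
    (hg : IntervalIntegrable g volume a b)
    (hrate : ∫⁻ t in Ioc a b, ENNReal.ofReal (Λ (g t)) ≤ ENNReal.ofReal r) :
    Λ ((∫ t in a..b, g t) / (b - a)) ≤ r / (b - a) := by
  have hΛc : Continuous Λ := continuousOn_univ.mp (hΛ.continuousOn isOpen_univ)
  have hgi : IntegrableOn g (Ioc a b) := (intervalIntegrable_iff_integrableOn_Ioc_of_le hab.le).mp hg
  obtain ⟨hΛgi, hΛgr⟩ := integrableOn_of_lintegral_ofReal_le hr (fun t => hΛ0 (g t))
    (hΛc.comp_aestronglyMeasurable hgi.aestronglyMeasurable) hrate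
  have hvol : volume.real (Ioc a b) = b - a := by simp [hab.le]
  have jensen := hΛ.map_set_average_le hΛc.continuousOn isClosed_univ (by simp [hab])
    (by simp) (Filter.Eventually.of_forall fun _ => mem_univ _) hgi hΛgi
  rw [setAverage_eq, setAverage_eq, hvol, smul_eq_mul, smul_eq_mul, inv_mul_eq_div,
    inv_mul_eq_div, ← intervalIntegral.integral_of_le hab.le] at jensen
  exact jensen.trans (div_le_div_of_nonneg_right hΛgr (sub_pos.mpr hab).le)

lemma mul_min_mul_le_of_monotone {h : ℝ → ℝ} {δ : ℝ} (hmono : Monotone h)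
    (hlin : ∀ t ∈ Icc (0:ℝ) 1, h t = δ * t) {a : ℝ} (ha : 0 ≤ a) :
    δ * min a 1 * a ≤ h a * a := by
  rw [← hlin _ ⟨le_min ha zero_le_one, min_le_right _ _⟩]
  exact mul_le_mul_of_nonneg_right (hmono (min_le_left _ _)) ha

lemma le_sqrt_of_mul_min_mul_le {δ ρ a : ℝ} (hδ : 0 < δ) (hρ : ρ ≤ δ)
    (h : δ * min a 1 * a ≤ ρ) : a ≤ √(ρ / δ) := by
  rcases le_or_gt a 1 with ha1 | ha1
  · rw [min_eq_left ha1] at h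
    exact Real.le_sqrt_of_sq_le (by rw [le_div_iff₀ hδ]; nlinarith)
  · rw [min_eq_right ha1.le] at h
    nlinarith

theorem rate_bound_gives_endpoint_growth_general
    (Λ : ℝ → ℝ) (hΛ0 : ∀ α, 0 ≤ Λ α) (hΛconv : ConvexOn ℝ Set.univ Λ)
    (h : ℝ → ℝ) (δ : ℝ) (hδ : 0 < δ)
    (hmono : Monotone h)
    (hlin : ∀ t ∈ Icc (0:ℝ) 1, h t = δ * t)
    (hΛh : ∀ α : ℝ, h |α| * |α| ≤ Λ α)
    (r : ℝ) (hr : 0 < r)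
    (T : ℝ) (hT : r / δ ≤ T) (hTpos : 0 < T)
    (f f' : ℝ → ℝ)
    (hrep : ∀ t ∈ Icc (0:ℝ) T, f t = ∫ s in (0:ℝ)..t, f' s)
    (hint : IntervalIntegrable f' MeasureTheory.volume 0 T)
    (hrate : ∫⁻ t in Ioc (0:ℝ) T, ENNReal.ofReal (Λ (f' t)) ≤ ENNReal.ofReal r) :
    |f T| ≤ Real.sqrt (r / δ) * Real.sqrt T := by
  have hjensen : Λ (f T / T) ≤ r / T := by
    simpa [← hrep T ⟨hTpos.le, le_rfl⟩] using
      hΛconv.map_intervalIntegral_div_le hΛ0 hTpos hr.le hint hrate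
  have hslope : |f T| / T ≤ √(r / T / δ) := by
    refine le_sqrt_of_mul_min_mul_le hδ ?_ ?_
    · rwa [div_le_iff₀ hTpos, mul_comm, ← div_le_iff₀ hδ]
    · have habs : |f T / T| = |f T| / T := by rw [abs_div, abs_of_pos hTpos]
      rw [← habs]
      exact ((mul_min_mul_le_of_monotone hmono hlin (abs_nonneg _)).trans (hΛh _)).trans hjensen
  calc |f T| = T * (|f T| / T) := by field_simp
    _ ≤ T * √(r / T / δ) := by gcongr
    _ = √(r / δ) * √T := by
      rw [div_right_comm, Real.sqrt_div' _ hTpos.le, mul_div_left_comm, Real.div_sqrt, mul_comm]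

/-- If the convex nonnegative deviation function `Λ` satisfies `Λ(α) ≥ h(|α|)|α|`
with `h` nondecreasing, continuous, `h(t)=δt` on `[0,1]`, `h → ∞`, and `f` is
absolutely continuous on `[0,T]` with `f(0)=0` and `∫_0^T Λ(f') ≤ r`, then for
`T ≥ r/δ` one has `|f(T)| ≤ √(r/δ)·√T`. -/
theorem rate_bound_gives_endpoint_growth
    (Λ : ℝ → ℝ) (hΛ0 : ∀ α, 0 ≤ Λ α) (hΛconv : ConvexOn ℝ Set.univ Λ)
    (h : ℝ → ℝ) (δ : ℝ) (hδ : 0 < δ)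
    (hmono : Monotone h) (hcont : Continuous h)
    (hlin : ∀ t ∈ Icc (0:ℝ) 1, h t = δ * t)
    (hinfty : Filter.Tendsto h Filter.atTop Filter.atTop)
    (hΛh : ∀ α : ℝ, h |α| * |α| ≤ Λ α)
    (r : ℝ) (hr : 0 < r)
    (T : ℝ) (hT : r / δ ≤ T) (hTpos : 0 < T)
    (f f' : ℝ → ℝ) (hf0 : f 0 = 0)
    (hrep : ∀ t ∈ Icc (0:ℝ) T, f t = ∫ s in (0:ℝ)..t, f' s)
    (hint : IntervalIntegrable f' MeasureTheory.volume 0 T)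
    (hrate : ∫⁻ t in Ioc (0:ℝ) T, ENNReal.ofReal (Λ (f' t)) ≤ ENNReal.ofReal r) :
    |f T| ≤ Real.sqrt (r / δ) * Real.sqrt T :=
  rate_bound_gives_endpoint_growth_general Λ hΛ0 hΛconv h δ hδ hmono hlin hΛh r hr T hT hTpos f f'
    hrep hint hrate
end
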